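/- Let g be a finite-dimensional Lie algebra over a field k with basis (T_i)_{i∈I} (I a finite index set), and let f_{ik}^j be the structure constants defined by ⁅T_i, T_k⁆ = Σ_j f_{ik}^j T_j. Let n ≥ 1 and let Π : I^n → k be any coefficient tensor satisfying, for every k ∈ I and every (i_1, …, i_n) ∈ I^n, the condition Σ_{j=1}^{n} Σ_{l∈I} f_{kl}^{i_j} · Π(i_1, …, i_{j-1}, l, i_{j+1}, …, i_n) = 0. Then the element P := Σ_{(i_1,…,i_n)∈I^n} Π(i_1,…,i_n) · ι(T_{i_1}) ⋯ ι(T_{i_n}) of the universal enveloping algebra U(g) commutes with ι(T_k) for every k ∈ I, and hence lies in the center of U(g). -/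

import Mathlib

/-!
Commutation with `a = ι(T_κ)` is a derivation, so `⁅a, T_{i_1} ⋯ T_{i_n}⁆` is the sum over the
slots `j` of the monomial with `T_{i_j}` replaced by `⁅a, T_{i_j}⁆ = ∑ₘ f_{κ i_j}^m T_m`.
Reindexing the sum over each slot by the involution `(i, m) ↦ (i[j ↦ m], i_j)` collects the
coefficient of every monomial `T_{i_1} ⋯ T_{i_n}` in `⁅a, P⁆` into the left-hand side of the
invariance condition on `Π`, so `⁅a, P⁆ = 0`. Since `U(g)` is generated by `ι(g)` and `ι` is
linear, commuting with the `ι(T_κ)` makes `P` central.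
-/

open UniversalEnvelopingAlgebra

theorem lie_list_prod_ofFn {A : Type*} [Ring A] (a : A) :
    ∀ {n : ℕ} (x : Fin n → A),
      ⁅a, (List.ofFn x).prod⁆ = ∑ j, (List.ofFn (Function.update x j ⁅a, x j⁆)).prod
  | 0, _ => by simp [Ring.lie_def]
  | n + 1, x => by
    have hsucc : ∀ (j : Fin n) (v : A),
        (List.ofFn (Function.update x j.succ v)).prod
          = x 0 * (List.ofFn (Function.update (fun m : Fin n => x m.succ) j v)).prod := by
      intro j v
      rw [List.ofFn_succ, List.prod_cons, Function.update_of_ne (Fin.succ_ne_zero j).symm]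
      congr 3
      funext m
      simp [Function.update_apply, Fin.succ_inj]
    have hzero : (List.ofFn (Function.update x 0 ⁅a, x 0⁆)).prod
        = ⁅a, x 0⁆ * (List.ofFn fun m : Fin n => x m.succ).prod := by
      rw [List.ofFn_succ, List.prod_cons]
      simp [Fin.succ_ne_zero]
    rw [Fin.sum_univ_succ, hzero]
    simp only [hsucc]
    rw [← Finset.mul_sum, ← lie_list_prod_ofFn a (fun m => x m.succ), List.ofFn_succ,
      List.prod_cons]
    simp only [Ring.lie_def]
    noncomm_ring

theorem lie_list_prod_ofFn_of_lie_eq_sum {k A I : Type*} [CommRing k] [Ring A] [Algebra k A]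
    [Fintype I] (e : I → A) (a : A) (c : I → I → k)
    (hc : ∀ i, ⁅a, e i⁆ = ∑ m, c i m • e m) {n : ℕ} (i : Fin n → I) :
    ⁅a, (List.ofFn (e ∘ i)).prod⁆
      = ∑ j, ∑ m, c (i j) m • (List.ofFn (e ∘ Function.update i j m)).prod := by
  rw [lie_list_prod_ofFn]
  refine Finset.sum_congr rfl fun j _ => ?_
  rw [Function.comp_apply, hc, ← MultilinearMap.mkPiAlgebraFin_apply (R := k),
    MultilinearMap.map_update_sum]
  refine Finset.sum_congr rfl fun m _ => ?_
  rw [MultilinearMap.map_update_smul, ← Function.comp_update,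
    MultilinearMap.mkPiAlgebraFin_apply]

theorem Fintype.sum_sum_update {ι α M : Type*} [Fintype ι] [DecidableEq ι] [Fintype α]
    [AddCommMonoid M] (j : ι) (H : (ι → α) → α → M) :
    ∑ i, ∑ m, H i m = ∑ i, ∑ l, H (Function.update i j l) (i j) := by
  have swap : Function.Involutive fun p : (ι → α) × α => (Function.update p.1 j p.2, p.1 j) := by
    intro p
    simp
  rw [← Fintype.sum_prod_type', ← Fintype.sum_prod_type']
  exact Fintype.sum_equiv (swap.toPerm _) _ _ fun p => by simp [Function.Involutive.toPerm]

theorem commute_sum_smul_list_prod_ofFn {k A I : Type*} [CommRing k] [Ring A] [Algebra k A]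
    [Fintype I] (e : I → A) (a : A) (c : I → I → k)
    (hc : ∀ i, ⁅a, e i⁆ = ∑ m, c i m • e m) {n : ℕ} (coeff : (Fin n → I) → k)
    (hcoeff : ∀ i, ∑ j, ∑ l, c l (i j) * coeff (Function.update i j l) = 0) :
    Commute a (∑ i, coeff i • (List.ofFn (e ∘ i)).prod) := by
  set Q : (Fin n → I) → A := fun i => (List.ofFn (e ∘ i)).prod
  rw [commute_iff_lie_eq]
  calc ⁅a, ∑ i, coeff i • Q i⁆
      = ∑ j, ∑ i, ∑ m, (coeff i * c (i j) m) • Q (Function.update i j m) := by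
        rw [Ring.lie_def, Finset.mul_sum, Finset.sum_mul, ← Finset.sum_sub_distrib]
        simp only [Q, mul_smul_comm, smul_mul_assoc, ← smul_sub, ← Ring.lie_def,
          lie_list_prod_ofFn_of_lie_eq_sum e a c hc, Finset.smul_sum, smul_smul]
        exact Finset.sum_comm
    _ = ∑ j, ∑ i, ∑ l, (c l (i j) * coeff (Function.update i j l)) • Q i := by
        refine Finset.sum_congr rfl fun j _ => ?_
        rw [Fintype.sum_sum_update j]
        simp [mul_comm]
    _ = ∑ i, (∑ j, ∑ l, c l (i j) * coeff (Function.update i j l)) • Q i := by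
        simp only [Finset.sum_smul]
        exact Finset.sum_comm
    _ = 0 := by simp [hcoeff]

namespace UniversalEnvelopingAlgebra

variable {R L : Type*} [CommRing R] [LieRing L] [LieAlgebra R L]

variable (R L) in
theorem adjoin_range_ι :
    Algebra.adjoin R (Set.range (ι R : L → UniversalEnvelopingAlgebra R L)) = ⊤ := by
  rw [show (ι R : L → UniversalEnvelopingAlgebra R L) = mkAlgHom R L ∘ TensorAlgebra.ι R from rfl,
    Set.range_comp, ← AlgHom.map_adjoin, TensorAlgebra.adjoin_range_ι, Algebra.map_top,
    AlgHom.range_eq_top]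
  exact RingCon.mkₐ_surjective _

theorem ι_lie (x y : L) : ι R ⁅x, y⁆ = ⁅ι R x, ι R y⁆ := by
  -- `ι` is a Lie hom for the commutator bracket, which is not a global `LieRing` instance.
  let := LieRing.ofAssociativeRing (A := UniversalEnvelopingAlgebra R L)
  rw [LieHom.map_lie, Ring.lie_def]

theorem mem_center_of_forall_commute_ι {u : UniversalEnvelopingAlgebra R L}
    (h : ∀ x, Commute (ι R x) u) : u ∈ Subalgebra.center R (UniversalEnvelopingAlgebra R L) := by
  have hle : ⊤ ≤ Subalgebra.centralizer R {u} :=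
    adjoin_range_ι R L ▸ Algebra.adjoin_le (Set.range_subset_iff.2 fun x => by
      rw [SetLike.mem_coe, Subalgebra.mem_centralizer_iff]
      rintro _ rfl
      exact (h x).eq.symm)
  rw [Subalgebra.mem_center_iff]
  exact fun b => ((Subalgebra.mem_centralizer_iff R).1 (hle Algebra.mem_top) u rfl).symm

end UniversalEnvelopingAlgebra

theorem centrality_criterion_weyl_polynomials_general
    (k : Type*) [Field k] (L : Type*) [LieRing L] [LieAlgebra k L]
    (I : Type*) [Fintype I] (T : Module.Basis I k L)
    (f : I → I → I → k)
    (hf : ∀ i j : I, ⁅T i, T j⁆ = ∑ m : I, f i j m • T m)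
    (n : ℕ) (Pp : (Fin n → I) → k)
    (hPp : ∀ (κ : I) (i : Fin n → I),
      ∑ j : Fin n, ∑ l : I, f κ l (i j) * Pp (Function.update i j l) = 0) :
    (∀ κ : I,
      (∑ i : Fin n → I, Pp i •
          (List.ofFn fun j : Fin n => ι k (T (i j))).prod) * ι k (T κ)
        = ι k (T κ) *
          (∑ i : Fin n → I, Pp i •
            (List.ofFn fun j : Fin n => ι k (T (i j))).prod)) ∧
    (∑ i : Fin n → I, Pp i •
        (List.ofFn fun j : Fin n => ι k (T (i j))).prod)
      ∈ Subalgebra.center k (UniversalEnvelopingAlgebra k L) := by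
  set P := ∑ i : Fin n → I, Pp i • (List.ofFn fun j : Fin n => ι k (T (i j))).prod
  have hbasis : ∀ κ, Commute (ι k (T κ)) P := by
    intro κ
    refine commute_sum_smul_list_prod_ofFn (fun i => ι k (T i)) _ (f κ) (fun i => ?_) Pp (hPp κ)
    rw [← ι_lie, hf, map_sum]
    simp only [map_smul]
  have hall : ∀ x, Commute (ι k x) P := fun x => by
    rw [← T.sum_repr x, map_sum]
    exact Commute.sum_left _ _ _ fun i _ => by rw [map_smul]; exact (hbasis i).smul_left _
  exact ⟨fun κ => (hbasis κ).eq.symm, mem_center_of_forall_commute_ι hall⟩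

/-- Centrality criterion in the universal enveloping algebra: if the
coefficient tensor `Π` of a degree-`n` polynomial in the generators of a
finite-dimensional Lie algebra satisfies
`Σ_j Σ_l f_{k l}^{i_j} Π(i₁,…,l,…,i_n) = 0` (with `l` inserted in the `j`-th
slot) for all `k` and all multi-indices, then the corresponding element
`P = Σ Π(i₁,…,i_n) T_{i₁} ⋯ T_{i_n}` of `U(g)` commutes with every generator
`ι(T_k)`, and hence lies in the center of `U(g)`. -/
theorem centrality_criterion_weyl_polynomials
    (k : Type*) [Field k] (L : Type*) [LieRing L] [LieAlgebra k L]
    [FiniteDimensional k L]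
    (I : Type*) [Fintype I] (T : Module.Basis I k L)
    (f : I → I → I → k)
    (hf : ∀ i j : I, ⁅T i, T j⁆ = ∑ m : I, f i j m • T m)
    (n : ℕ) (hn : 1 ≤ n) (Pp : (Fin n → I) → k)
    (hPp : ∀ (κ : I) (i : Fin n → I),
      ∑ j : Fin n, ∑ l : I, f κ l (i j) * Pp (Function.update i j l) = 0) :
    (∀ κ : I,
      (∑ i : Fin n → I, Pp i •
          (List.ofFn fun j : Fin n => ι k (T (i j))).prod) * ι k (T κ)
        = ι k (T κ) *
          (∑ i : Fin n → I, Pp i •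
            (List.ofFn fun j : Fin n => ι k (T (i j))).prod)) ∧
    (∑ i : Fin n → I, Pp i •
        (List.ofFn fun j : Fin n => ι k (T (i j))).prod)
      ∈ Subalgebra.center k (UniversalEnvelopingAlgebra k L) :=
  centrality_criterion_weyl_polynomials_general k L I T f hf n Pp hPp
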